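/- Suppose v^max := 1_n + 2·L_red⁻¹ q belongs to D and the feasible set F = {v ∈ D : v ≤ g(v) componentwise} is nonempty. Then for every weight vector w ∈ ℝⁿ with w_i > 0 for all i, the function v ↦ Σ_{i=1}^n w_i·log(v_i) attains its maximum over F at a unique point v*; this maximizer satisfies g(v*) = v*, it is independent of the choice of w, and v ≤ v* componentwise for every v ∈ F. -/

import Mathlib

/-!
The feasible set `F = {v ∈ D | v ≤ g v}` is the set of post-fixed points of `g`, which is
monotone on the upper set `D`. It is bounded above by `v^max`: by AM–GM, `v ≤ g v` gives
`L_red (v - 1) ≤ 2 q = L_red (v^max - 1)`, and `L_red` is inverse-positive by the discrete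
minimum principle on the connected graph. Hence, as in Knaster–Tarski, `sup F` lies in `F`, is
a fixed point of `g` and dominates `F`; a strictly increasing objective such as
`∑ wᵢ log vᵢ` is therefore maximised on `F` exactly at `sup F`.
-/

open Finset Matrix

noncomputable section

/-- Extension of a voltage vector `v ∈ ℝⁿ` to all buses `{0,1,…,n}`,
with the slack-bus convention `v₀ = 1`. -/
def extV {n : ℕ} (v : Fin n → ℝ) : Fin (n + 1) → ℝ := Fin.cons (1 : ℝ) v

/-- The domain `D = {v ∈ ℝⁿ : vᵢ > 0 ∀ i, vᵢ vₖ ≥ sᵢₖ² on every edge}` (with `v₀ = 1`). -/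
def memD {n : ℕ} (B : Matrix (Fin (n + 1)) (Fin (n + 1)) ℝ)
    (s : Fin (n + 1) → Fin (n + 1) → ℝ) (v : Fin n → ℝ) : Prop :=
  (∀ i, 0 < v i) ∧ ∀ i k, 0 < B i k → s i k ^ 2 ≤ extV v i * extV v k

/-- The fixed-point map `g` with
`gᵢ(v) = qᵢ/𝐁ᵢ + Σ_{k ∈ N(i)} (Bᵢₖ/𝐁ᵢ)·√(vᵢvₖ − sᵢₖ²)`. -/
def gmap {n : ℕ} (B : Matrix (Fin (n + 1)) (Fin (n + 1)) ℝ)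
    (s : Fin (n + 1) → Fin (n + 1) → ℝ) (q : Fin n → ℝ) (v : Fin n → ℝ) :
    Fin n → ℝ := fun i =>
  q i / (∑ k, B i.succ k) +
    ∑ k ∈ Finset.univ.filter (fun k => 0 < B i.succ k),
      (B i.succ k / (∑ k', B i.succ k')) *
        Real.sqrt (extV v i.succ * extV v k - s i.succ k ^ 2)

/-- The reduced Laplacian `L_red` (Laplacian of the weighted graph with the
row and column of vertex `0` deleted). -/
def Lred {n : ℕ} (B : Matrix (Fin (n + 1)) (Fin (n + 1)) ℝ) :
    Matrix (Fin n) (Fin n) ℝ := fun i k =>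
  if i = k then ∑ j, B i.succ j else -B i.succ k.succ

/-- `v^max := 1ₙ + 2·L_red⁻¹ q`. -/
def vmax {n : ℕ} (B : Matrix (Fin (n + 1)) (Fin (n + 1)) ℝ) (q : Fin n → ℝ) :
    Fin n → ℝ := fun i => 1 + 2 * ((Lred B)⁻¹ *ᵥ q) i

theorem MonotoneOn.exists_isGreatest_postfixed_isFixedPt {α : Type*}
    [ConditionallyCompleteLattice α] {D : Set α} {g : α → α} (hg : MonotoneOn g D)
    (hD : IsUpperSet D) (hne : {v ∈ D | v ≤ g v}.Nonempty)
    (hbdd : BddAbove {v ∈ D | v ≤ g v}) :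
    ∃ m, IsGreatest {v ∈ D | v ≤ g v} m ∧ Function.IsFixedPt g m := by
  set F := {v ∈ D | v ≤ g v}
  have hle : ∀ v ∈ F, v ≤ sSup F := fun v hv => le_csSup hbdd hv
  obtain ⟨v₀, hv₀⟩ := hne
  have hmD : sSup F ∈ D := hD (hle v₀ hv₀) hv₀.1
  have hmg : sSup F ≤ g (sSup F) :=
    csSup_le ⟨v₀, hv₀⟩ fun v hv => hv.2.trans (hg hv.1 hmD (hle v hv))
  have hgF : g (sSup F) ∈ F := ⟨hD hmg hmD, hg hmD (hD hmg hmD) hmg⟩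
  exact ⟨sSup F, ⟨⟨hmD, hmg⟩, hle⟩, le_antisymm (hle _ hgF) hmg⟩

theorem strictMonoOn_sum_mul_log {ι : Type*} [Fintype ι] {w : ι → ℝ} (hw : ∀ i, 0 < w i) :
    StrictMonoOn (fun v : ι → ℝ => ∑ i, w i * Real.log (v i)) {v | ∀ i, 0 < v i} := by
  intro v hv v' _ hlt
  obtain ⟨hle, i, hi⟩ := Pi.lt_def.mp hlt
  exact Finset.sum_lt_sum
    (fun j _ => mul_le_mul_of_nonneg_left (Real.log_le_log (hv j) (hle j)) (hw j).le)
    ⟨i, Finset.mem_univ i, mul_lt_mul_of_pos_left (Real.log_lt_log (hv i) hi) (hw i)⟩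

theorem Real.sqrt_mul_sub_sq_le {a b : ℝ} (ha : 0 ≤ a) (hb : 0 ≤ b) (c : ℝ) :
    √(a * b - c ^ 2) ≤ (a + b) / 2 :=
  Real.sqrt_le_iff.mpr ⟨by positivity, by nlinarith [sq_nonneg c, sq_nonneg (a - b)]⟩

theorem eq_of_isMin_of_sum_mul_sub_nonneg {V : Type*} [Fintype V] {B : V → V → ℝ}
    (hB : ∀ x y, 0 ≤ B x y) {U : V → ℝ} {x y : V} (hmin : ∀ z, U x ≤ U z)
    (hx : 0 ≤ ∑ z, B x z * (U x - U z)) (hxy : 0 < B x y) : U y = U x := by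
  have hterm : ∀ z ∈ Finset.univ, B x z * (U x - U z) ≤ 0 := fun z _ =>
    mul_nonpos_of_nonneg_of_nonpos (hB x z) (sub_nonpos.mpr (hmin z))
  have hzero := (Finset.sum_eq_zero_iff_of_nonpos hterm).mp
    (le_antisymm (Finset.sum_nonpos hterm) hx) y (Finset.mem_univ y)
  linarith [(mul_eq_zero.mp hzero).resolve_left hxy.ne']

/-- Discrete minimum principle: the minimum value of `U` spreads along every edge leaving a
vertex other than `x₀`, so following a walk it reaches `x₀`. -/
theorem SimpleGraph.Connected.le_of_sum_mul_sub_nonneg {V : Type*} [Fintype V]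
    {G : SimpleGraph V} (hG : G.Connected) {B : V → V → ℝ} (hB : ∀ x y, 0 ≤ B x y)
    (hadj : ∀ x y, G.Adj x y → 0 < B x y) {U : V → ℝ} {x₀ : V}
    (hU : ∀ x, x ≠ x₀ → 0 ≤ ∑ y, B x y * (U x - U y)) (x : V) : U x₀ ≤ U x := by
  have := hG.nonempty
  obtain ⟨xmin, hxmin⟩ := Finite.exists_min U
  have hspread : ∀ a c (p : G.Walk a c), c = x₀ → U a = U xmin → U x₀ = U xmin := by
    intro a c p
    induction p with
    | nil => rintro rfl; exact id
    | @cons a b c hab _ ih =>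
      rintro rfl ha
      by_cases hax : a = c
      · rwa [← hax]
      · refine ih rfl ?_
        rw [← ha]
        exact eq_of_isMin_of_sum_mul_sub_nonneg hB (fun z => ha ▸ hxmin z) (hU a hax)
          (hadj a b hab)
  obtain ⟨p⟩ := hG.preconnected xmin x₀
  exact (hspread xmin x₀ p rfl rfl).trans_le (hxmin x)

section PowerFlow

variable {n : ℕ} {B : Matrix (Fin (n + 1)) (Fin (n + 1)) ℝ}
  {s : Fin (n + 1) → Fin (n + 1) → ℝ} {q : Fin n → ℝ}

theorem extV_pos {v : Fin n → ℝ} (hv : ∀ i, 0 < v i) (k : Fin (n + 1)) : 0 < extV v k :=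
  Fin.cases one_pos hv k

theorem extV_mono : Monotone (extV (n := n)) :=
  fun _ _ h => Fin.cons_le_cons.mpr ⟨le_rfl, h⟩

theorem isUpperSet_memD : IsUpperSet {v | memD B s v} := by
  intro v v' hvv' ⟨hv, hedge⟩
  refine ⟨fun i => (hv i).trans_le (hvv' i), fun i k hik => (hedge i k hik).trans ?_⟩
  exact mul_le_mul (extV_mono hvv' i) (extV_mono hvv' k) (extV_pos hv k).le
    ((extV_pos hv i).le.trans (extV_mono hvv' i))

theorem monotoneOn_gmap (hB : ∀ i k, 0 ≤ B i k) : MonotoneOn (gmap B s q) {v | memD B s v} := by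
  intro v ⟨hv, _⟩ v' _ hvv' i
  refine add_le_add_right (Finset.sum_le_sum fun k _ => ?_) _
  refine mul_le_mul_of_nonneg_left ?_ (div_nonneg (hB _ _) (Finset.sum_nonneg fun j _ => hB _ _))
  refine Real.sqrt_le_sqrt (sub_le_sub_right ?_ _)
  exact mul_le_mul (extV_mono hvv' _) (extV_mono hvv' k) (extV_pos hv k).le
    ((extV_pos hv _).le.trans (extV_mono hvv' _))

theorem sum_row_pos_of_connected (hB : ∀ i k, 0 ≤ B i k) {G : SimpleGraph (Fin (n + 1))}
    (hG : G.Connected) (hadj : ∀ i k, G.Adj i k → 0 < B i k) (i : Fin n) :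
    0 < ∑ k, B i.succ k := by
  obtain ⟨p⟩ := hG.preconnected i.succ 0
  have hnil : ¬p.Nil := p.not_nil_of_ne (Fin.succ_ne_zero i)
  exact (hadj _ _ (p.adj_snd hnil)).trans_le
    (Finset.single_le_sum (fun j _ => hB _ j) (Finset.mem_univ _))

theorem Lred_mulVec_sub_apply (hBdiag : ∀ i, B i i = 0) (U : Fin (n + 1) → ℝ) (i : Fin n) :
    (Lred B *ᵥ fun k => U k.succ - U 0) i = ∑ j, B i.succ j * (U i.succ - U j) := by
  have hL : Lred B = Matrix.diagonal (fun i => ∑ j, B i.succ j) - B.submatrix Fin.succ Fin.succ := by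
    ext i k
    by_cases h : i = k
    · subst h; simp [Lred, hBdiag]
    · simp [Lred, h]
  rw [hL, Matrix.sub_mulVec, Pi.sub_apply, Matrix.mulVec_diagonal]
  simp only [mulVec, dotProduct, submatrix_apply]
  rw [Fin.sum_univ_succ (fun j => B i.succ j * (U i.succ - U j)),
    Fin.sum_univ_succ (fun j => B i.succ j)]
  simp only [mul_sub, Finset.sum_sub_distrib, ← Finset.sum_mul, add_mul]
  ring

theorem nonneg_of_Lred_mulVec_nonneg (hB : ∀ i k, 0 ≤ B i k) (hBdiag : ∀ i, B i i = 0)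
    {G : SimpleGraph (Fin (n + 1))} (hG : G.Connected) (hadj : ∀ i k, G.Adj i k → 0 < B i k)
    {u : Fin n → ℝ} (hu : ∀ i, 0 ≤ (Lred B *ᵥ u) i) (i : Fin n) : 0 ≤ u i := by
  set U : Fin (n + 1) → ℝ := Fin.cons 0 u
  have hUu : (fun k => U k.succ - U 0) = u := by funext k; simp [U]
  have hmin := hG.le_of_sum_mul_sub_nonneg hB hadj (U := U) (x₀ := 0) (fun x hx => by
    obtain ⟨j, rfl⟩ := Fin.exists_succ_eq.mpr hx
    rw [← Lred_mulVec_sub_apply hBdiag U j, hUu]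
    exact hu j) i.succ
  simpa [U] using hmin

theorem isUnit_det_Lred (hB : ∀ i k, 0 ≤ B i k) (hBdiag : ∀ i, B i i = 0)
    {G : SimpleGraph (Fin (n + 1))} (hG : G.Connected) (hadj : ∀ i k, G.Adj i k → 0 < B i k) :
    IsUnit (Lred B).det := by
  refine isUnit_iff_ne_zero.mpr fun hdet => ?_
  obtain ⟨u, hu0, hu⟩ := Matrix.exists_mulVec_eq_zero_iff.mpr hdet
  refine hu0 (funext fun i => le_antisymm ?_ ?_)
  · have := nonneg_of_Lred_mulVec_nonneg hB hBdiag hG hadj (u := -u)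
      (fun j => by simp [Matrix.mulVec_neg, hu]) i
    simpa using this
  · exact nonneg_of_Lred_mulVec_nonneg hB hBdiag hG hadj (fun j => by simp [hu]) i

theorem Lred_mulVec_vmax_sub_one (h : IsUnit (Lred B).det) :
    (Lred B *ᵥ fun k => vmax B q k - 1) = (2 : ℝ) • q := by
  have hvmax : (fun k => vmax B q k - 1) = (2 : ℝ) • ((Lred B)⁻¹ *ᵥ q) := by
    funext k
    simp [vmax]
  rw [hvmax, Matrix.mulVec_smul, Matrix.mulVec_mulVec, Matrix.mul_nonsing_inv _ h,
    Matrix.one_mulVec]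

theorem sum_mul_gmap_le (hB : ∀ i k, 0 ≤ B i k) {v : Fin n → ℝ} (hv : ∀ i, 0 < v i) (i : Fin n)
    (hBi : ∑ k, B i.succ k ≠ 0) :
    (∑ k, B i.succ k) * gmap B s q v i
      ≤ q i + ∑ k, B i.succ k * ((extV v i.succ + extV v k) / 2) := by
  have hV := extV_pos hv
  calc (∑ k, B i.succ k) * gmap B s q v i
      = q i + ∑ k ∈ Finset.univ.filter (fun k => 0 < B i.succ k),
          B i.succ k * √(extV v i.succ * extV v k - s i.succ k ^ 2) := by
        rw [gmap, mul_add, mul_div_cancel₀ _ hBi, Finset.mul_sum]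
        congr 1
        exact Finset.sum_congr rfl fun k _ => by field_simp
    _ ≤ q i + ∑ k ∈ Finset.univ.filter (fun k => 0 < B i.succ k),
          B i.succ k * ((extV v i.succ + extV v k) / 2) := by
        refine add_le_add_right (Finset.sum_le_sum fun k _ => ?_) _
        exact mul_le_mul_of_nonneg_left (Real.sqrt_mul_sub_sq_le (hV _).le (hV k).le _) (hB _ _)
    _ ≤ q i + ∑ k, B i.succ k * ((extV v i.succ + extV v k) / 2) := by
        refine add_le_add_right (Finset.sum_le_sum_of_subset_of_nonneg (Finset.filter_subset _ _)
          fun k _ _ => ?_) _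
        have := hV i.succ
        have := hV k
        have := hB i.succ k
        positivity

theorem Lred_mulVec_sub_one_le (hB : ∀ i k, 0 ≤ B i k) (hBdiag : ∀ i, B i i = 0)
    {G : SimpleGraph (Fin (n + 1))} (hG : G.Connected) (hadj : ∀ i k, G.Adj i k → 0 < B i k)
    {v : Fin n → ℝ} (hv : ∀ i, 0 < v i) (hvg : v ≤ gmap B s q v) (i : Fin n) :
    (Lred B *ᵥ fun k => v k - 1) i ≤ 2 * q i := by
  have hBi := sum_row_pos_of_connected hB hG hadj i
  have hgv := mul_le_mul_of_nonneg_left (hvg i) hBi.le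
  have hbound := sum_mul_gmap_le hB hv i hBi.ne' (s := s) (q := q)
  have hvV : (fun k => v k - 1) = fun k => extV v k.succ - extV v 0 := by funext k; simp [extV]
  have hvi : extV v i.succ = v i := by simp [extV]
  have hsum : ∑ j, B i.succ j * (extV v i.succ - extV v j) = 2 * ((∑ j, B i.succ j) * extV v i.succ
      - ∑ k, B i.succ k * ((extV v i.succ + extV v k) / 2)) := by
    rw [Finset.sum_mul, ← Finset.sum_sub_distrib, Finset.mul_sum]
    exact Finset.sum_congr rfl fun _ _ => by ring
  rw [hvV, Lred_mulVec_sub_apply hBdiag, hsum]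
  rw [hvi] at hbound ⊢
  linarith

theorem le_vmax (hB : ∀ i k, 0 ≤ B i k) (hBdiag : ∀ i, B i i = 0)
    {G : SimpleGraph (Fin (n + 1))} (hG : G.Connected) (hadj : ∀ i k, G.Adj i k → 0 < B i k)
    {v : Fin n → ℝ} (hv : ∀ i, 0 < v i) (hvg : v ≤ gmap B s q v) : v ≤ vmax B q := by
  have hsplit : (fun k => vmax B q k - v k) = (fun k => vmax B q k - 1) - fun k => v k - 1 := by
    funext k
    simp
  have hdiff : ∀ j, 0 ≤ (Lred B *ᵥ fun k => vmax B q k - v k) j := fun j => by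
    rw [hsplit, Matrix.mulVec_sub, Pi.sub_apply,
      Lred_mulVec_vmax_sub_one (isUnit_det_Lred hB hBdiag hG hadj), Pi.smul_apply, smul_eq_mul]
    linarith [Lred_mulVec_sub_one_le hB hBdiag hG hadj hv hvg j]
  intro i
  linarith [nonneg_of_Lred_mulVec_nonneg hB hBdiag hG hadj hdiff i]

end PowerFlow

theorem stmt13_general {n : ℕ}
    (B : Matrix (Fin (n + 1)) (Fin (n + 1)) ℝ)
    (hBdiag : ∀ i, B i i = 0)
    (hBnonneg : ∀ i k, 0 ≤ B i k)
    (G : SimpleGraph (Fin (n + 1)))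
    (hGadj : ∀ i k, G.Adj i k ↔ 0 < B i k)
    (hGtree : G.IsTree)
    (q : Fin n → ℝ)
    (s : Fin (n + 1) → Fin (n + 1) → ℝ)
    (hfeas : ∃ v, memD B s v ∧ ∀ i, v i ≤ gmap B s q v i) :
    ∃ vstar : Fin n → ℝ,
      (memD B s vstar ∧ ∀ i, vstar i ≤ gmap B s q vstar i) ∧
      gmap B s q vstar = vstar ∧
      (∀ v, memD B s v → (∀ i, v i ≤ gmap B s q v i) → ∀ i, v i ≤ vstar i) ∧
      ∀ w : Fin n → ℝ, (∀ i, 0 < w i) →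
        ∀ v, memD B s v → (∀ i, v i ≤ gmap B s q v i) →
          (∑ i, w i * Real.log (v i) ≤ ∑ i, w i * Real.log (vstar i)) ∧
          ((∑ i, w i * Real.log (v i)) = ∑ i, w i * Real.log (vstar i) → v = vstar) := by
  have hadj : ∀ i k, G.Adj i k → 0 < B i k := fun i k => (hGadj i k).mp
  obtain ⟨vstar, ⟨hvstar, hgreatest⟩, hfix⟩ :=
    MonotoneOn.exists_isGreatest_postfixed_isFixedPt (monotoneOn_gmap hBnonneg) isUpperSet_memD hfeas
      ⟨vmax B q, fun v hv => le_vmax hBnonneg hBdiag hGtree.connected hadj hv.1.1 hv.2⟩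
  refine ⟨vstar, hvstar, hfix, fun v hvD hvg => hgreatest ⟨hvD, hvg⟩, fun w hw v hvD hvg => ?_⟩
  have hlog := strictMonoOn_sum_mul_log hw
  have hle : v ≤ vstar := hgreatest ⟨hvD, hvg⟩
  exact ⟨hlog.monotoneOn hvD.1 hvstar.1.1 hle,
    fun heq => hle.eq_or_lt.resolve_right fun hlt => (hlog hvD.1 hvstar.1.1 hlt).ne heq⟩

theorem stmt13 {n : ℕ} (hn : 1 ≤ n)
    (B : Matrix (Fin (n + 1)) (Fin (n + 1)) ℝ)
    (hBsymm : ∀ i k, B i k = B k i)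
    (hBdiag : ∀ i, B i i = 0)
    (hBnonneg : ∀ i k, 0 ≤ B i k)
    (G : SimpleGraph (Fin (n + 1)))
    (hGadj : ∀ i k, G.Adj i k ↔ 0 < B i k)
    (hGtree : G.IsTree)
    (q : Fin n → ℝ)
    (s : Fin (n + 1) → Fin (n + 1) → ℝ)
    (hssymm : ∀ i k, s i k = s k i)
    (hvmaxD : memD B s (vmax B q))
    (hfeas : ∃ v, memD B s v ∧ ∀ i, v i ≤ gmap B s q v i) :
    ∃ vstar : Fin n → ℝ,
      (memD B s vstar ∧ ∀ i, vstar i ≤ gmap B s q vstar i) ∧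
      gmap B s q vstar = vstar ∧
      (∀ v, memD B s v → (∀ i, v i ≤ gmap B s q v i) → ∀ i, v i ≤ vstar i) ∧
      ∀ w : Fin n → ℝ, (∀ i, 0 < w i) →
        ∀ v, memD B s v → (∀ i, v i ≤ gmap B s q v i) →
          (∑ i, w i * Real.log (v i) ≤ ∑ i, w i * Real.log (vstar i)) ∧
          ((∑ i, w i * Real.log (v i)) = ∑ i, w i * Real.log (vstar i) → v = vstar) :=
  stmt13_general B hBdiag hBnonneg G hGadj hGtree q s hfeas
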